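/- arXiv:1410.2523 — 4 statements merged into one kernel-verified Lean document; each statement's English description precedes it below -/
import Mathlib

section
/- Let f : ℝ^d → ℝ≥0 be an even function with f(0)=0. The function z ↦ exp(-c·f(z)) is positive semidefinite for every c > 0 if and only if the kernel A_f(z_1,z_2) = f(z_1) + f(z_2) - f(z_1 - z_2) is positive semidefinite. -/
/-!
For the backward direction, `exp (-c f (zᵢ - zⱼ)) = e^{-c f(zᵢ)} · exp (c A_f(zᵢ, zⱼ)) · e^{-c f(zⱼ)}`,
and the entrywise exponential of a positive semidefinite matrix is positive semidefinite: it is a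
convergent sum of Hadamard powers, which are positive semidefinite by the Schur product theorem.

For the forward direction, if `∑ tᵢ = 0` then `Φ c = ∑ exp (-c f (zᵢ - zⱼ)) tᵢ tⱼ` vanishes at `c = 0`
and is nonnegative for `c > 0`, so `Φ' 0 = -∑ f (zᵢ - zⱼ) tᵢ tⱼ ≥ 0`. Adjoining the point `0` with
weight `-∑ tᵢ` to arbitrary points and weights turns this into positive semidefiniteness of `A_f`.
-/

open Finset Matrix
open scoped ComplexOrder

lemma Real.hasSum_exp (a : ℝ) : HasSum (fun n => (n.factorial : ℝ)⁻¹ * a ^ n) (Real.exp a) := by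
  simpa [Real.exp_eq_exp_ℝ, div_eq_inv_mul] using NormedSpace.expSeries_div_hasSum_exp a

namespace Matrix

variable {ι : Type*} [Fintype ι]

lemma dotProduct_mulVec_eq_sum_sum (M : Matrix ι ι ℝ) (t : ι → ℝ) :
    t ⬝ᵥ M *ᵥ t = ∑ i, ∑ j, M i j * t i * t j := by
  simp only [dotProduct, mulVec, Finset.mul_sum]
  exact Finset.sum_congr rfl fun i _ => Finset.sum_congr rfl fun j _ => by ring

lemma PosSemidef.sum_sum_mul_nonneg {M : Matrix ι ι ℝ} (hM : M.PosSemidef) (t : ι → ℝ) :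
    0 ≤ ∑ i, ∑ j, M i j * t i * t j := by
  simpa [dotProduct_mulVec_eq_sum_sum] using hM.dotProduct_mulVec_nonneg t

lemma IsHermitian.posSemidef_of_sum_sum_mul_nonneg {M : Matrix ι ι ℝ} (hM : M.IsHermitian)
    (h : ∀ t : ι → ℝ, 0 ≤ ∑ i, ∑ j, M i j * t i * t j) : M.PosSemidef :=
  .of_dotProduct_mulVec_nonneg hM fun t => by simpa [dotProduct_mulVec_eq_sum_sum] using h t

lemma PosSemidef.map_pow {𝕜 : Type*} [RCLike 𝕜] {A : Matrix ι ι 𝕜} (hA : A.PosSemidef) (n : ℕ) :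
    (A.map (· ^ n)).PosSemidef := by
  induction n with
  | zero =>
    convert posSemidef_vecMulVec_self_star (1 : ι → 𝕜) using 1
    ext i j
    simp [vecMulVec_apply]
  | succ n ih =>
    convert hA.hadamard ih using 1
    ext i j
    simp [pow_succ']

lemma PosSemidef.map_exp {A : Matrix ι ι ℝ} (hA : A.PosSemidef) :
    (A.map Real.exp).PosSemidef := by
  refine (hA.isHermitian.map Real.exp fun _ => rfl).posSemidef_of_sum_sum_mul_nonneg fun t => ?_
  have hsum : HasSum (fun n => (n.factorial : ℝ)⁻¹ * ∑ i, ∑ j, (A i j) ^ n * t i * t j)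
      (∑ i, ∑ j, Real.exp (A i j) * t i * t j) := by
    simp only [Finset.mul_sum]
    refine hasSum_sum fun i _ => hasSum_sum fun j _ => ?_
    simpa only [mul_assoc] using (Real.hasSum_exp (A i j)).mul_right (t i * t j)
  exact hsum.nonneg fun n => mul_nonneg (by positivity) ((hA.map_pow n).sum_sum_mul_nonneg t)

end Matrix

lemma sum_sum_mul_nonpos_of_exp {ι : Type*} [Fintype ι] (F : ι → ι → ℝ) {t : ι → ℝ}
    (ht : ∑ i, t i = 0) (hexp : ∀ c : ℝ, 0 < c → 0 ≤ ∑ i, ∑ j, Real.exp (-c * F i j) * t i * t j) :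
    ∑ i, ∑ j, F i j * t i * t j ≤ 0 := by
  set Φ : ℝ → ℝ := fun c => ∑ i, ∑ j, Real.exp (-c * F i j) * t i * t j
  have hΦ0 : Φ 0 = 0 := by simp [Φ, ← Finset.mul_sum, ht]
  have hderiv : HasDerivAt Φ (∑ i, ∑ j, -F i j * t i * t j) 0 := by
    have := HasDerivAt.fun_sum (u := univ) fun i _ => HasDerivAt.fun_sum (u := univ) fun j _ =>
      ((((hasDerivAt_id (0 : ℝ)).neg.mul_const (F i j)).exp.mul_const (t i)).mul_const (t j))
    simpa [Φ] using this
  have hslope := (hasDerivWithinAt_iff_tendsto_slope' (s := Set.Ioi 0) (by simp)).1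
    hderiv.hasDerivWithinAt
  have hnonneg : 0 ≤ ∑ i, ∑ j, -F i j * t i * t j := by
    refine ge_of_tendsto hslope ?_
    filter_upwards [self_mem_nhdsWithin] with c (hc : 0 < c)
    rw [slope_def_field, hΦ0, sub_zero, sub_zero]
    exact div_nonneg (hexp c hc) hc.le
  simp only [neg_mul, Finset.sum_neg_distrib] at hnonneg
  linarith

lemma sum_sum_cons_zero_eq {G : Type*} [AddGroup G] {f : G → ℝ} (hf_even : ∀ z, f (-z) = f z)
    (hf_zero : f 0 = 0) {k : ℕ} (z : Fin k → G) (t : Fin k → ℝ) :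
    ∑ i, ∑ j, f (vecCons 0 z i - vecCons 0 z j) * vecCons (-∑ i, t i) t i *
        vecCons (-∑ i, t i) t j
      = -∑ i, ∑ j, (f (z i) + f (z j) - f (z i - z j)) * t i * t j := by
  set T := ∑ i, t i
  set P := ∑ i, f (z i) * t i
  have hleft : ∑ i, ∑ j, f (z i) * t i * t j = P * T := (Finset.sum_mul_sum ..).symm
  have hright : ∑ i, ∑ j, f (z j) * t i * t j = P * T := by
    rw [Finset.sum_comm, ← hleft]
    exact Finset.sum_congr rfl fun i _ => Finset.sum_congr rfl fun j _ => mul_right_comm _ _ _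
  have hrow : ∑ i, f (z i) * t i * -T = P * -T := (Finset.sum_mul ..).symm
  have hcol : ∑ i, f (z i) * -T * t i = P * -T := by
    rw [← hrow]
    exact Finset.sum_congr rfl fun i _ => mul_right_comm _ _ _
  simp only [Fin.sum_univ_succ, cons_val_zero, cons_val_succ, sub_zero, zero_sub, hf_even, hf_zero]
  simp only [add_mul, sub_mul, Finset.sum_add_distrib, Finset.sum_sub_distrib, hleft, hright,
    hrow, hcol]
  ring

theorem stmt1_general {d : ℕ} (f : EuclideanSpace ℝ (Fin d) → ℝ)
    (hf_even : ∀ z, f (-z) = f z) (hf_zero : f 0 = 0) :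
    (∀ c : ℝ, 0 < c → ∀ (k : ℕ) (z : Fin k → EuclideanSpace ℝ (Fin d)) (t : Fin k → ℝ),
        0 ≤ ∑ i, ∑ j, Real.exp (-c * f (z i - z j)) * t i * t j) ↔
      (∀ (k : ℕ) (z : Fin k → EuclideanSpace ℝ (Fin d)) (t : Fin k → ℝ),
        0 ≤ ∑ i, ∑ j, (f (z i) + f (z j) - f (z i - z j)) * t i * t j) := by
  constructor
  · intro hexp k z t
    have h := sum_sum_mul_nonpos_of_exp (fun i j => f (vecCons 0 z i - vecCons 0 z j))
      (t := vecCons (-∑ i, t i) t) (by simp [Fin.sum_univ_succ]) fun c hc => hexp c hc _ _ _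
    rw [sum_sum_cons_zero_eq hf_even hf_zero] at h
    linarith
  · intro hA c hc k z t
    set A : Matrix (Fin k) (Fin k) ℝ := of fun i j => f (z i) + f (z j) - f (z i - z j)
    have hA_herm : A.IsHermitian := by
      ext i j
      simp only [A, conjTranspose_apply, star_trivial, of_apply, ← neg_sub (z i), hf_even]
      ring
    have hcA : (c • A).PosSemidef := (hA_herm.posSemidef_of_sum_sum_mul_nonneg (hA k z)).smul hc.le
    have hfactor : ∀ i j, Real.exp (-c * f (z i - z j))
        = Real.exp (-c * f (z i)) * Real.exp ((c • A) i j) * Real.exp (-c * f (z j)) := by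
      intro i j
      rw [← Real.exp_add, ← Real.exp_add]
      simp only [A, Matrix.smul_apply, of_apply, smul_eq_mul]
      congr 1
      ring
    convert hcA.map_exp.sum_sum_mul_nonneg (fun i => Real.exp (-c * f (z i)) * t i) using 1
    refine Finset.sum_congr rfl fun i _ => Finset.sum_congr rfl fun j _ => ?_
    rw [hfactor, map_apply]
    ring

theorem stmt1 {d : ℕ} (f : EuclideanSpace ℝ (Fin d) → ℝ)
    (hf_nonneg : ∀ z, 0 ≤ f z) (hf_even : ∀ z, f (-z) = f z) (hf_zero : f 0 = 0) :
    (∀ c : ℝ, 0 < c → ∀ (k : ℕ) (z : Fin k → EuclideanSpace ℝ (Fin d)) (t : Fin k → ℝ),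
        0 ≤ ∑ i, ∑ j, Real.exp (-c * f (z i - z j)) * t i * t j) ↔
      (∀ (k : ℕ) (z : Fin k → EuclideanSpace ℝ (Fin d)) (t : Fin k → ℝ),
        0 ≤ ∑ i, ∑ j, (f (z i) + f (z j) - f (z i - z j)) * t i * t j) :=
  stmt1_general f hf_even hf_zero
end

section
/- For 0 < H < 1, the integral ∫_0^∞ (1 - cos t) t^(-2H-1) dt converges and equals π / (4 H Γ(2H) sin(Hπ)). -/
/-!
Since `Γ(2H+1) t^(-2H-1) = ∫₀^∞ x^(2H) e^(-tx) dx` and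
`∫₀^∞ (1 - cos t) e^(-xt) dt = 1/(x(1+x²))`, Tonelli turns `Γ(2H+1)` times the integral
into `∫₀^∞ x^(2H-1)/(1+x²) dx`. Writing `1/(1+x²) = ∫₀^∞ e^(-u(1+x²)) du` and swapping
once more gives `Γ(H) Γ(1-H) / 2`, which the reflection formula evaluates as `π / (2 sin(πH))`.
-/

open MeasureTheory Real Set

theorem integrable_and_integral_swap_of_nonneg {α β : Type*} [MeasurableSpace α]
    [MeasurableSpace β] {μ : Measure α} {ν : Measure β} [SFinite μ] [SFinite ν]
    {F : α → β → ℝ} {f : α → ℝ} {g : β → ℝ}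
    (hF : AEStronglyMeasurable (Function.uncurry F) (μ.prod ν))
    (hF₀ : ∀ᵐ x ∂μ, 0 ≤ᵐ[ν] F x) (hslice : ∀ᵐ x ∂μ, Integrable (F x) ν)
    (hf : ∀ᵐ x ∂μ, ∫ y, F x y ∂ν = f x) (hg : ∀ᵐ y ∂ν, ∫ x, F x y ∂μ = g y)
    (hf_int : Integrable f μ) :
    Integrable g ν ∧ ∫ y, g y ∂ν = ∫ x, f x ∂μ := by
  have hnorm : ∀ᵐ x ∂μ, ∫ y, ‖F x y‖ ∂ν = f x := by
    filter_upwards [hF₀, hf] with x hx hfx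
    rw [← hfx]
    exact integral_congr_ae (hx.mono fun y hy ↦ Real.norm_of_nonneg hy)
  have hprod : Integrable (Function.uncurry F) (μ.prod ν) :=
    (integrable_prod_iff hF).2 ⟨hslice, hf_int.congr (hnorm.mono fun x hx ↦ hx.symm)⟩
  refine ⟨hprod.integral_prod_right.congr hg, ?_⟩
  rw [← integral_congr_ae hg, ← integral_congr_ae hf]
  exact (integral_integral_swap hprod).symm

theorem integrableOn_exp_neg_mul_Ioi {x : ℝ} (hx : 0 < x) :
    IntegrableOn (fun t ↦ exp (-(x * t))) (Ioi 0) := by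
  simpa only [neg_mul] using exp_neg_integrableOn_Ioi 0 hx

theorem integral_exp_neg_mul_Ioi {x : ℝ} (hx : 0 < x) :
    ∫ t in Ioi (0 : ℝ), exp (-(x * t)) = 1 / x := by
  simp_rw [← neg_mul]
  rw [integral_exp_mul_Ioi (neg_neg_of_pos hx)]
  simp

theorem cos_mul_exp_neg_mul_eq_re (x t : ℝ) :
    cos t * exp (-(x * t)) = RCLike.re (Complex.exp ((-x + Complex.I) * t)) := by
  simp [Complex.exp_re, mul_comm]

theorem integrableOn_cos_mul_exp_neg_mul_Ioi {x : ℝ} (hx : 0 < x) :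
    IntegrableOn (fun t ↦ cos t * exp (-(x * t))) (Ioi 0) := by
  simp_rw [cos_mul_exp_neg_mul_eq_re]
  exact (integrableOn_exp_mul_complex_Ioi (by simpa using hx) 0).re

theorem integral_cos_mul_exp_neg_mul_Ioi {x : ℝ} (hx : 0 < x) :
    ∫ t in Ioi (0 : ℝ), cos t * exp (-(x * t)) = x / (1 + x ^ 2) := by
  simp_rw [cos_mul_exp_neg_mul_eq_re]
  rw [integral_re (integrableOn_exp_mul_complex_Ioi (by simpa using hx) 0),
    integral_exp_mul_complex_Ioi (by simpa using hx) 0]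
  simp [Complex.div_re, Complex.normSq_apply, add_comm, sq]

theorem integrableOn_one_sub_cos_mul_exp_neg_mul_Ioi {x : ℝ} (hx : 0 < x) :
    IntegrableOn (fun t ↦ (1 - cos t) * exp (-(x * t))) (Ioi 0) := by
  simp_rw [sub_mul, one_mul]
  exact (integrableOn_exp_neg_mul_Ioi hx).sub (integrableOn_cos_mul_exp_neg_mul_Ioi hx)

theorem integral_one_sub_cos_mul_exp_neg_mul_Ioi {x : ℝ} (hx : 0 < x) :
    ∫ t in Ioi (0 : ℝ), (1 - cos t) * exp (-(x * t)) = 1 / (x * (1 + x ^ 2)) := by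
  simp_rw [sub_mul, one_mul]
  rw [integral_sub (integrableOn_exp_neg_mul_Ioi hx) (integrableOn_cos_mul_exp_neg_mul_Ioi hx),
    integral_exp_neg_mul_Ioi hx, integral_cos_mul_exp_neg_mul_Ioi hx]
  field_simp
  ring

theorem Gamma_mul_rpow_neg_eq_integral {a t : ℝ} (ha : 0 < a) (ht : 0 < t) :
    Gamma a * t ^ (-a) = ∫ x in Ioi (0 : ℝ), x ^ (a - 1) * exp (-(t * x)) := by
  rw [integral_rpow_mul_exp_neg_mul_Ioi ha ht, one_div, inv_rpow ht.le, rpow_neg ht.le, mul_comm]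

theorem integral_rpow_mul_exp_neg_mul_sq_Ioi {s b : ℝ} (hs : -1 < s) (hb : 0 < b) :
    ∫ x in Ioi (0 : ℝ), x ^ s * exp (-b * x ^ 2)
      = b ^ (-(s + 1) / 2) * Gamma ((s + 1) / 2) / 2 := by
  simp_rw [← rpow_two]
  rw [integral_rpow_mul_exp_neg_mul_rpow two_pos hs hb]
  ring

theorem integrableOn_and_integral_rpow_div_one_add_sq {H : ℝ} (h₀ : 0 < H) (h₁ : H < 1) :
    IntegrableOn (fun x : ℝ ↦ x ^ (2 * H - 1) / (1 + x ^ 2)) (Ioi 0) ∧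
    ∫ x in Ioi (0 : ℝ), x ^ (2 * H - 1) / (1 + x ^ 2) = π / (2 * sin (π * H)) := by
  have hs : -1 < 2 * H - 1 := by linarith
  have hF_x : ∀ u > 0, ∫ x in Ioi (0 : ℝ), exp (-u) * (x ^ (2 * H - 1) * exp (-u * x ^ 2))
      = exp (-u) * u ^ (1 - H - 1) * (Gamma H / 2) := by
    intro u hu
    rw [integral_const_mul, integral_rpow_mul_exp_neg_mul_sq_Ioi hs hu]
    ring_nf
  have hF_u : ∀ x > 0, ∫ u in Ioi (0 : ℝ), exp (-u) * (x ^ (2 * H - 1) * exp (-u * x ^ 2))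
      = x ^ (2 * H - 1) / (1 + x ^ 2) := by
    intro x hx
    have : ∀ u, exp (-u) * (x ^ (2 * H - 1) * exp (-u * x ^ 2))
        = x ^ (2 * H - 1) * exp (-((1 + x ^ 2) * u)) := fun u ↦ by
      rw [mul_left_comm, ← exp_add]
      ring_nf
    simp_rw [this]
    rw [integral_const_mul, integral_exp_neg_mul_Ioi (by positivity), mul_one_div]
  obtain ⟨hint, hswap⟩ := integrable_and_integral_swap_of_nonneg (by fun_prop)
    (ae_of_all _ fun u ↦ ae_restrict_of_forall_mem measurableSet_Ioi fun x hx ↦ by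
      have : 0 < x := hx
      positivity)
    (ae_restrict_of_forall_mem measurableSet_Ioi fun u hu ↦
      (integrableOn_rpow_mul_exp_neg_mul_sq hu hs).const_mul _)
    (ae_restrict_of_forall_mem measurableSet_Ioi hF_x)
    (ae_restrict_of_forall_mem measurableSet_Ioi hF_u)
    ((GammaIntegral_convergent (by linarith : 0 < 1 - H)).mul_const (Gamma H / 2))
  refine ⟨hint, hswap.trans ?_⟩
  rw [integral_mul_const, ← Gamma_eq_integral (by linarith), mul_div_assoc', mul_comm,
    Gamma_mul_Gamma_one_sub, div_div, mul_comm 2]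

theorem integrableOn_and_Gamma_mul_integral_one_sub_cos_mul_rpow {H : ℝ} (h₀ : 0 < H)
    (h₁ : H < 1) :
    IntegrableOn (fun t : ℝ ↦ (1 - cos t) * t ^ (-2 * H - 1)) (Ioi 0) ∧
    Gamma (2 * H + 1) * ∫ t in Ioi (0 : ℝ), (1 - cos t) * t ^ (-2 * H - 1)
      = π / (2 * sin (π * H)) := by
  have hF_t : ∀ x > 0,
      ∫ t in Ioi (0 : ℝ), (1 - cos t) * (x ^ (2 * H + 1 - 1) * exp (-(t * x)))
        = x ^ (2 * H - 1) / (1 + x ^ 2) := by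
    intro x hx
    simp_rw [add_sub_cancel_right, mul_left_comm (1 - cos _), mul_comm _ x]
    rw [integral_const_mul, integral_one_sub_cos_mul_exp_neg_mul_Ioi hx, rpow_sub hx, rpow_one]
    field_simp
  have hF_x : ∀ t > 0,
      ∫ x in Ioi (0 : ℝ), (1 - cos t) * (x ^ (2 * H + 1 - 1) * exp (-(t * x)))
        = Gamma (2 * H + 1) * ((1 - cos t) * t ^ (-2 * H - 1)) := by
    intro t ht
    rw [integral_const_mul, ← Gamma_mul_rpow_neg_eq_integral (by linarith) ht]
    ring_nf
  obtain ⟨hJ_int, hJ⟩ := integrableOn_and_integral_rpow_div_one_add_sq h₀ h₁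
  obtain ⟨hint, hswap⟩ := integrable_and_integral_swap_of_nonneg (by fun_prop)
    (ae_restrict_of_forall_mem measurableSet_Ioi fun x hx ↦ ae_of_all _ fun t ↦ by
      have : 0 < x := hx
      exact mul_nonneg (sub_nonneg.2 (cos_le_one t)) (by positivity))
    (ae_restrict_of_forall_mem measurableSet_Ioi fun x hx ↦
      ((integrableOn_one_sub_cos_mul_exp_neg_mul_Ioi hx).const_mul (x ^ (2 * H))).congr
        (ae_of_all _ fun t ↦ by ring_nf))
    (ae_restrict_of_forall_mem measurableSet_Ioi hF_t)
    (ae_restrict_of_forall_mem measurableSet_Ioi hF_x) hJ_int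
  refine ⟨(integrable_const_mul_iff (Gamma_pos_of_pos (by linarith)).ne'.isUnit _).1 hint, ?_⟩
  rw [← integral_const_mul, hswap, hJ]

theorem stmt2 (H : ℝ) (hH : H ∈ Set.Ioo (0 : ℝ) 1) :
    IntegrableOn (fun t : ℝ => (1 - Real.cos t) * t ^ (-2 * H - 1)) (Set.Ioi 0) ∧
    ∫ t in Set.Ioi (0 : ℝ), (1 - Real.cos t) * t ^ (-2 * H - 1)
      = Real.pi / (4 * H * Real.Gamma (2 * H) * Real.sin (H * Real.pi)) := by
  obtain ⟨h₀, h₁⟩ := hH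
  obtain ⟨hint, hval⟩ := integrableOn_and_Gamma_mul_integral_one_sub_cos_mul_rpow h₀ h₁
  have hΓ₀ : 0 < Gamma (2 * H) := Gamma_pos_of_pos (by positivity)
  have hsin : 0 < sin (π * H) := sin_pos_of_pos_of_lt_pi (by positivity) (by nlinarith [pi_pos])
  rw [Gamma_add_one (by positivity)] at hval
  refine ⟨hint, ?_⟩
  rw [mul_comm H π]
  field_simp at hval ⊢
  linarith
end

section
/- Let K be a convex body in ℝ^d and z ∈ ℝ^d. Then ∫_{ℝ^d} |1_{z ∈ x+rK} - 1_{0 ∈ x+rK}| dx = Vol_d((z + rK) Δ rK) ≤ min(2 r^d Vol_d(K), r^{d-1} Vol_{d-1}(proj_{z^⊥} K) · 2‖z‖), for every r > 0; in particular the function (x,r) ↦ 1_{z∈x+rK} - 1_{0∈x+rK} is integrable with respect to ν_H(dx,dr) = dx r^{-d-1+2H} dr whenever 0 < H < 1/2. -/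
/-!
Translation and reflection invariance of Lebesgue measure turn the integral of
`|1_{z ∈ x + S} - 1_{0 ∈ x + S}|` into `vol ((z + S) ∆ S)`, which is at most `2 vol S`.
For the other bound slice along `z`: every line parallel to `z` meets a convex body in an
interval, whose symmetric difference with its translate by `‖z‖` has length at most `2‖z‖`, so by
Fubini `vol ((z + S) ∆ S)` is at most `2‖z‖` times the Lebesgue measure of the shadow of `S` in
transverse coordinates. Taken in the sup norm, Lebesgue measure on these coordinates is
`μH[d-1]`, and the coordinate map is 1-Lipschitz from `proj_{z^⊥} S` onto the shadow.
For `S = rK` the two bounds are `O(r^d)` and `O(r^(d-1))`, so `r^(-d-1+2H)` times their minimum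
is integrable on `(0, ∞)` when `0 < 2H < 1`.
-/

open scoped Pointwise NNReal ENNReal symmDiff RealInnerProductSpace
open MeasureTheory Set Module

section Translates

variable {G : Type*} [AddCommGroup G] (S : Set G) (z : G)

lemma setOf_mem_vadd_eq (v : G) : {x | v ∈ x +ᵥ S} = v +ᵥ -S := by
  ext x
  simp [mem_vadd_set_iff_neg_vadd_mem, neg_add_eq_sub]

lemma abs_indicator_vadd_sub_indicator_vadd (x : G) :
    |(x +ᵥ S).indicator (fun _ => (1 : ℝ)) z - (x +ᵥ S).indicator (fun _ => 1) 0|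
      = ({x | z ∈ x +ᵥ S} ∆ {x | (0 : G) ∈ x +ᵥ S}).indicator 1 x := by
  change |{x | z ∈ x +ᵥ S}.indicator 1 x - {x | (0 : G) ∈ x +ᵥ S}.indicator 1 x| = _
  rw [← abs_indicator_symmDiff]
  exact abs_of_nonneg (indicator_nonneg (fun _ _ => zero_le_one) x)

variable [MeasurableSpace G]

lemma measure_symmDiff_vadd_le (μ : Measure G) [μ.IsAddLeftInvariant] :
    μ ((z +ᵥ S) ∆ S) ≤ 2 * μ S :=
  calc μ ((z +ᵥ S) ∆ S) ≤ μ (z +ᵥ S) + μ S :=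
        (measure_mono symmDiff_subset_union).trans (measure_union_le _ _)
    _ = 2 * μ S := by rw [measure_vadd, two_mul]

lemma measure_symmDiff_setOf_mem_vadd [MeasurableNeg G] (μ : Measure G) [μ.IsAddLeftInvariant]
    [μ.IsNegInvariant] :
    μ ({x | z ∈ x +ᵥ S} ∆ {x | (0 : G) ∈ x +ᵥ S}) = μ ((z +ᵥ S) ∆ S) := by
  have : (z +ᵥ -S) ∆ ((0 : G) +ᵥ -S) = -(-z +ᵥ ((z +ᵥ S) ∆ S)) := by
    ext x
    simp [mem_vadd_set_iff_neg_vadd_mem, mem_symmDiff, ← sub_eq_add_neg, neg_add_eq_sub,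
      or_comm]
  rw [setOf_mem_vadd_eq, setOf_mem_vadd_eq, this, Measure.measure_neg, measure_vadd]

variable {S} [MeasurableAdd G] [MeasurableNeg G]

lemma MeasurableSet.symmDiff_setOf_mem_vadd (hS : MeasurableSet S) :
    MeasurableSet ({x : G | z ∈ x +ᵥ S} ∆ {x | (0 : G) ∈ x +ᵥ S}) := by
  simp only [setOf_mem_vadd_eq]
  exact (hS.neg.const_vadd z).symmDiff (hS.neg.const_vadd 0)

variable (μ : Measure G) [μ.IsAddLeftInvariant] [μ.IsNegInvariant]

lemma integral_abs_indicator_vadd_sub_indicator_vadd (hS : MeasurableSet S) :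
    ∫ x : G, |(x +ᵥ S).indicator (fun _ => (1 : ℝ)) z - (x +ᵥ S).indicator (fun _ => 1) 0| ∂μ
      = (μ ((z +ᵥ S) ∆ S)).toReal := by
  simp_rw [abs_indicator_vadd_sub_indicator_vadd,
    integral_indicator_one (hS.symmDiff_setOf_mem_vadd z), measureReal_def,
    measure_symmDiff_setOf_mem_vadd]

lemma lintegral_enorm_indicator_vadd_sub_indicator_vadd (hS : MeasurableSet S) :
    ∫⁻ x : G, ‖(x +ᵥ S).indicator (fun _ => (1 : ℝ)) z - (x +ᵥ S).indicator (fun _ => 1) 0‖ₑ ∂μ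
      = μ ((z +ᵥ S) ∆ S) := by
  have h (x : G) :
      ‖(x +ᵥ S).indicator (fun _ => (1 : ℝ)) z - (x +ᵥ S).indicator (fun _ => 1) 0‖ₑ
        = ({x : G | z ∈ x +ᵥ S} ∆ {x | (0 : G) ∈ x +ᵥ S}).indicator 1 x := by
    rw [← Real.enorm_abs, abs_indicator_vadd_sub_indicator_vadd,
      enorm_indicator_eq_indicator_enorm]
    simp [Pi.one_def]
  rw [lintegral_congr h, lintegral_indicator_one (hS.symmDiff_setOf_mem_vadd z),
    measure_symmDiff_setOf_mem_vadd]

end Translates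

lemma Set.OrdConnected.symmDiff_vadd_subset {T : Set ℝ} (hT : T.OrdConnected)
    (hbelow : BddBelow T) (habove : BddAbove T) {c : ℝ} (hc : 0 ≤ c) :
    (c +ᵥ T) ∆ T ⊆ Icc (sInf T) (sInf T + c) ∪ Icc (sSup T) (sSup T + c) := by
  rintro x (⟨hxc, hx⟩ | ⟨hx, hxc⟩) <;> rw [mem_vadd_set_iff_neg_vadd_mem, vadd_eq_add,
    neg_add_eq_sub] at hxc
  · refine Or.inr ⟨le_of_not_gt fun hlt => hx ?_, by linarith [le_csSup habove hxc]⟩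
    obtain ⟨t, ht, hxt⟩ := exists_lt_of_lt_csSup ⟨_, hxc⟩ hlt
    exact hT.out hxc ht ⟨by linarith, hxt.le⟩
  · refine Or.inl ⟨csInf_le hbelow hx, le_of_not_gt fun hlt => hxc ?_⟩
    obtain ⟨t, ht, htx⟩ := exists_lt_of_csInf_lt ⟨_, hx⟩ (by linarith : sInf T < x - c)
    exact hT.out ht hx ⟨htx.le, by linarith⟩

lemma Set.OrdConnected.volume_symmDiff_vadd_le {T : Set ℝ} (hT : T.OrdConnected)
    (hbdd : Bornology.IsBounded T) {c : ℝ} (hc : 0 ≤ c) :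
    volume ((c +ᵥ T) ∆ T) ≤ ENNReal.ofReal (2 * c) :=
  calc volume ((c +ᵥ T) ∆ T)
      ≤ volume (Icc (sInf T) (sInf T + c) ∪ Icc (sSup T) (sSup T + c)) :=
        measure_mono (hT.symmDiff_vadd_subset hbdd.bddBelow hbdd.bddAbove hc)
    _ ≤ ENNReal.ofReal c + ENNReal.ofReal c := by
        refine (measure_union_le _ _).trans ?_
        simp only [Real.volume_Icc, add_sub_cancel_left, le_refl]
    _ = ENNReal.ofReal (2 * c) := by rw [← ENNReal.ofReal_add hc hc, two_mul]

lemma Convex.volume_prod_symmDiff_vadd_le {F : Type*} [NormedAddCommGroup F] [NormedSpace ℝ F]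
    [MeasurableSpace F] (ν : Measure F) [SFinite ν] {A : Set (ℝ × F)} (hAconv : Convex ℝ A)
    (hAbdd : Bornology.IsBounded A) (hAmeas : MeasurableSet A) {c : ℝ} (hc : 0 ≤ c) :
    (volume.prod ν) (((c, (0 : F)) +ᵥ A) ∆ A) ≤ ENNReal.ofReal (2 * c) * ν (Prod.snd '' A) := by
  have htrans : (c, (0 : F)) +ᵥ A = (fun p => (p.1 - c, p.2)) ⁻¹' A := by
    ext ⟨t, w⟩
    simp [mem_vadd_set_iff_neg_vadd_mem, neg_add_eq_sub]
  have hmeas : MeasurableSet (((c, (0 : F)) +ᵥ A) ∆ A) := by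
    rw [htrans]
    exact (hAmeas.preimage ((measurable_fst.sub_const c).prodMk measurable_snd)).symmDiff hAmeas
  have hfiber : ∀ w, volume ((fun t => (t, w)) ⁻¹' (((c, (0 : F)) +ᵥ A) ∆ A))
      ≤ (Prod.snd '' A).indicator (fun _ => ENNReal.ofReal (2 * c)) w := by
    intro w
    set T := (fun t => (t, w)) ⁻¹' A
    have hT : (fun t => (t, w)) ⁻¹' (((c, (0 : F)) +ᵥ A) ∆ A) = (c +ᵥ T) ∆ T := by
      rw [preimage_symmDiff, htrans]
      congr 1
      ext t
      simp [T, mem_vadd_set_iff_neg_vadd_mem, neg_add_eq_sub]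
    by_cases hw : w ∈ Prod.snd '' A
    · rw [indicator_of_mem hw, hT]
      refine Set.OrdConnected.volume_symmDiff_vadd_le ?_ ?_ hc
      · refine convex_iff_ordConnected.1 fun s hs t ht a b ha hb hab => ?_
        simpa [T, Prod.smul_mk, ← add_smul, hab] using hAconv hs ht ha hb hab
      · exact (LipschitzWith.prod_fst.isBounded_image hAbdd).subset
          fun t ht => ⟨(t, w), ht, rfl⟩
    · have : T = ∅ := eq_empty_of_forall_notMem fun t ht => hw ⟨_, ht, rfl⟩
      simp [hT, this]
  calc (volume.prod ν) (((c, (0 : F)) +ᵥ A) ∆ A)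
      = ∫⁻ w, volume ((fun t => (t, w)) ⁻¹' (((c, (0 : F)) +ᵥ A) ∆ A)) ∂ν :=
        Measure.prod_apply_symm hmeas
    _ ≤ ∫⁻ w, (Prod.snd '' A).indicator (fun _ => ENNReal.ofReal (2 * c)) w ∂ν :=
        lintegral_mono hfiber
    _ ≤ ENNReal.ofReal (2 * c) * ν (Prod.snd '' A) := lintegral_indicator_const_le _ _

section PerpProj

variable {F : Type*} [NormedAddCommGroup F] [InnerProductSpace ℝ F]

noncomputable def perpProj (z x : F) : F := x - (⟪x, z⟫ / ‖z‖ ^ 2) • z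

lemma perpProj_eq_sub_inner_smul {z : F} (hz : z ≠ 0) (x : F) :
    perpProj z x = x - ⟪‖z‖⁻¹ • z, x⟫ • (‖z‖⁻¹ • z) := by
  have : ‖z‖ ≠ 0 := norm_ne_zero_iff.2 hz
  rw [perpProj, real_inner_smul_left, smul_smul, real_inner_comm]
  congr 2
  field_simp

lemma perpProj_smul (z : F) (c : ℝ) (x : F) : perpProj z (c • x) = c • perpProj z x := by
  simp only [perpProj, real_inner_smul_left, smul_sub, smul_smul, mul_div_assoc]

lemma hausdorffMeasure_fin_eq_volume (m : ℕ) : (μH[m] : Measure (Fin m → ℝ)) = volume := by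
  simpa using hausdorffMeasure_pi_real (ι := Fin m)

variable [MeasurableSpace F] [BorelSpace F] {m : ℕ}

lemma hausdorffMeasure_perpProj_image_smul (z : F) {r : ℝ} (hr : 0 < r) (S : Set F) :
    μH[m] (perpProj z '' (r • S)) = ENNReal.ofReal (r ^ m) * μH[m] (perpProj z '' S) := by
  rw [image_smul_comm _ _ _ (perpProj_smul z r),
    Measure.hausdorffMeasure_smul₀ (Nat.cast_nonneg _) hr.ne', ENNReal.smul_def, smul_eq_mul,
    NNReal.rpow_natCast, Real.nnnorm_of_nonneg hr.le, ENNReal.ofReal, Real.toNNReal_pow hr.le,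
    Real.toNNReal_of_nonneg hr.le]

variable [FiniteDimensional ℝ F]

lemma exists_measurePreserving_linearEquiv_prod (hF : finrank ℝ F = m + 1) {z : F}
    (hz : z ≠ 0) :
    ∃ Φ : F ≃ₗ[ℝ] ℝ × (Fin m → ℝ), MeasurePreserving Φ ∧ Φ z = (‖z‖, 0) ∧
      (∀ x, Φ (perpProj z x) = (0, (Φ x).2)) ∧ LipschitzWith 1 (fun x => (Φ x).2) := by
  classical
  set u := ‖z‖⁻¹ • z
  have hu : ‖u‖ = 1 := norm_smul_inv_norm hz
  obtain ⟨b, hb⟩ := Orthonormal.exists_orthonormalBasis_extension_of_card_eq (𝕜 := ℝ)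
    (v := fun _ : Fin (m + 1) => u) (s := {0}) (by simpa using hF) <| by
      refine orthonormal_iff_ite.2 fun i j => ?_
      simp [Subsingleton.elim i j, hu]
  have hb0 : b 0 = u := hb 0 rfl
  let Φ : F ≃ₗ[ℝ] ℝ × (Fin m → ℝ) := b.repr.toLinearEquiv ≪≫ₗ
    WithLp.linearEquiv 2 ℝ (Fin (m + 1) → ℝ) ≪≫ₗ (Fin.consLinearEquiv ℝ fun _ => ℝ).symm
  have hΦ : ∀ x, Φ x = (b.repr x 0, fun j => b.repr x j.succ) := fun x => rfl
  have hΦu : Φ u = (1, 0) := by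
    rw [hΦ, ← hb0, b.repr_self]
    ext j <;> simp [Fin.succ_ne_zero]
  refine ⟨Φ, ?_, ?_, fun x => ?_, ?_⟩
  · have : ⇑Φ = MeasurableEquiv.piFinSuccAbove (fun _ => ℝ) 0 ∘ WithLp.ofLp ∘ b.repr := by
      ext x j <;> simp [hΦ, Fin.tail]
    rw [this]
    exact (volume_preserving_piFinSuccAbove _ 0).comp
      ((PiLp.volume_preserving_ofLp _).comp b.measurePreserving_repr)
  · rw [show z = ‖z‖ • u by simp [u, smul_smul, norm_ne_zero_iff.2 hz], map_smul, hΦu]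
    simp [norm_smul, hu]
  · rw [perpProj_eq_sub_inner_smul hz]
    change Φ (x - ⟪u, x⟫ • u) = _
    rw [map_sub, map_smul, hΦu, hΦ, ← hb0, b.repr_apply_apply]
    simp
  · refine AddMonoidHomClass.lipschitz_of_bound_nnnorm
      ((LinearMap.snd ℝ ℝ _).comp Φ.toLinearMap) 1 fun x => ?_
    rw [one_mul, ← NNReal.coe_le_coe, coe_nnnorm, coe_nnnorm, ← b.repr.norm_map x]
    refine (pi_norm_le_iff_of_nonneg (norm_nonneg _)).2 fun j => ?_
    exact PiLp.norm_apply_le (b.repr x) j.succ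

theorem Convex.volume_symmDiff_vadd_le_hausdorffMeasure (hF : finrank ℝ F = m + 1)
    {S : Set F} (hSconv : Convex ℝ S) (hScomp : IsCompact S) {z : F} (hz : z ≠ 0) :
    volume ((z +ᵥ S) ∆ S) ≤ ENNReal.ofReal (2 * ‖z‖) * μH[m] (perpProj z '' S) := by
  obtain ⟨Φ, hΦ, hΦz, hΦP, hLip⟩ := exists_measurePreserving_linearEquiv_prod hF hz
  set A := Φ '' S
  have hAcomp : IsCompact A := hScomp.image Φ.toLinearMap.continuous_of_finiteDimensional
  have hpre : Φ ⁻¹' (((‖z‖, (0 : Fin m → ℝ)) +ᵥ A) ∆ A) = (z +ᵥ S) ∆ S := by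
    rw [← hΦz, ← image_vadd_distrib, preimage_symmDiff, Φ.injective.preimage_image,
      Φ.injective.preimage_image]
  have hsnd : Prod.snd '' A = (fun x => (Φ x).2) '' (perpProj z '' S) := by
    simp only [A, image_image, hΦP]
  calc volume ((z +ᵥ S) ∆ S) = volume (((‖z‖, (0 : Fin m → ℝ)) +ᵥ A) ∆ A) := by
        rw [← hpre]
        exact hΦ.measure_preimage
          ((hAcomp.vadd _).measurableSet.symmDiff hAcomp.measurableSet).nullMeasurableSet
    _ ≤ ENNReal.ofReal (2 * ‖z‖) * volume (Prod.snd '' A) := by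
        rw [Measure.volume_eq_prod]
        exact (hSconv.linear_image Φ.toLinearMap).volume_prod_symmDiff_vadd_le volume
          hAcomp.isBounded hAcomp.measurableSet (norm_nonneg z)
    _ ≤ ENNReal.ofReal (2 * ‖z‖) * μH[m] (perpProj z '' S) := by
        rw [hsnd, ← hausdorffMeasure_fin_eq_volume]
        gcongr
        simpa using hLip.hausdorffMeasure_image_le (Nat.cast_nonneg m) _

theorem IsCompact.hausdorffMeasure_perpProj_image_lt_top (hF : finrank ℝ F = m + 1)
    {S : Set F} (hS : IsCompact S) {z : F} (hz : z ≠ 0) : μH[m] (perpProj z '' S) < ⊤ := by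
  obtain ⟨Φ, -, -, hΦP, hLip⟩ := exists_measurePreserving_linearEquiv_prod hF hz
  let ψ : (Fin m → ℝ) →L[ℝ] F :=
    (Φ.symm.toLinearMap ∘ₗ LinearMap.inr ℝ ℝ _).toContinuousLinearMap
  have hψ : perpProj z '' S = ψ '' ((fun x => (Φ x).2) '' S) := by
    rw [image_image]
    refine image_congr fun x _ => ?_
    simp [ψ, ← hΦP]
  rw [hψ]
  calc μH[m] (ψ '' ((fun x => (Φ x).2) '' S))
      ≤ (‖ψ‖₊ : ℝ≥0∞) ^ (m : ℝ) * μH[m] ((fun x => (Φ x).2) '' S) :=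
        ψ.lipschitz.hausdorffMeasure_image_le (Nat.cast_nonneg m) _
    _ < ⊤ := by
        rw [hausdorffMeasure_fin_eq_volume]
        exact ENNReal.mul_lt_top (by finiteness) (hS.image hLip.continuous).measure_lt_top

theorem Convex.volume_symmDiff_vadd_smul_le (hF : finrank ℝ F = m + 1) {K : Set F}
    (hKconv : Convex ℝ K) (hKcomp : IsCompact K) {z : F} (hz : z ≠ 0) {r : ℝ} (hr : 0 < r) :
    volume ((z +ᵥ r • K) ∆ (r • K))
      ≤ ENNReal.ofReal (r ^ m * (μH[m] (perpProj z '' K)).toReal * (2 * ‖z‖)) := by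
  refine ((hKconv.smul r).volume_symmDiff_vadd_le_hausdorffMeasure hF (hKcomp.smul r)
    hz).trans_eq ?_
  rw [hausdorffMeasure_perpProj_image_smul z hr, mul_comm,
    ENNReal.ofReal_mul (by positivity : 0 ≤ r ^ m * (μH[m] (perpProj z '' K)).toReal),
    ENNReal.ofReal_mul (by positivity : 0 ≤ r ^ m),
    ENNReal.ofReal_toReal (hKcomp.hausdorffMeasure_perpProj_image_lt_top hF hz).ne]

end PerpProj

lemma IsSigmaCompact.measurableSet {X : Type*} [TopologicalSpace X] [T2Space X]
    [MeasurableSpace X] [OpensMeasurableSpace X] {s : Set X} (hs : IsSigmaCompact s) :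
    MeasurableSet s := by
  obtain ⟨K, hK, rfl⟩ := hs
  exact .iUnion fun n => (hK n).measurableSet

lemma lintegral_Ioi_ofReal_rpow_mul_lt_top {V : ℝ → ℝ≥0∞} {d s a b : ℝ} (hs0 : 0 < s)
    (hs1 : s < 1) (hVa : ∀ r > 0, V r ≤ ENNReal.ofReal (a * r ^ d))
    (hVb : ∀ r > 0, V r ≤ ENNReal.ofReal (b * r ^ (d - 1))) :
    ∫⁻ r in Ioi 0, ENNReal.ofReal (r ^ (-d - 1 + s)) * V r < ⊤ := by
  have hmul : ∀ r > (0 : ℝ), ∀ c t : ℝ, ENNReal.ofReal (r ^ (-d - 1 + s)) *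
      ENNReal.ofReal (c * r ^ t) = ENNReal.ofReal (c * r ^ (-d - 1 + s + t)) := fun r hr c t => by
    rw [← ENNReal.ofReal_mul (Real.rpow_nonneg hr.le _), mul_left_comm, ← Real.rpow_add hr]
  rw [← Ioc_union_Ioi_eq_Ioi zero_le_one, lintegral_union measurableSet_Ioi Ioc_disjoint_Ioi_same]
  refine ENNReal.add_lt_top.2 ⟨?_, ?_⟩
  · refine (setLIntegral_mono (by fun_prop) fun r hr => ?_).trans_lt
      ((intervalIntegral.intervalIntegrable_rpow' (by linarith : -1 < s - 1)).1.const_mul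
        a).lintegral_lt_top
    calc ENNReal.ofReal (r ^ (-d - 1 + s)) * V r
        ≤ ENNReal.ofReal (r ^ (-d - 1 + s)) * ENNReal.ofReal (a * r ^ d) := by
          gcongr; exact hVa r hr.1
      _ = ENNReal.ofReal (a * r ^ (s - 1)) := by rw [hmul r hr.1]; ring_nf
  · refine (setLIntegral_mono (by fun_prop) fun r hr => ?_).trans_lt
      ((integrableOn_Ioi_rpow_of_lt (by linarith : s - 2 < -1) zero_lt_one).const_mul
        b).lintegral_lt_top
    have hr0 : (0 : ℝ) < r := zero_lt_one.trans hr
    calc ENNReal.ofReal (r ^ (-d - 1 + s)) * V r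
        ≤ ENNReal.ofReal (r ^ (-d - 1 + s)) * ENNReal.ofReal (b * r ^ (d - 1)) := by
          gcongr; exact hVb r hr0
      _ = ENNReal.ofReal (b * r ^ (s - 2)) := by rw [hmul r hr0]; ring_nf

section Integrability

variable {E : Type*} [NormedAddCommGroup E] [NormedSpace ℝ E] [FiniteDimensional ℝ E]
  [MeasurableSpace E] [BorelSpace E]

lemma IsCompact.measure_symmDiff_vadd_smul_le {K : Set E} (hK : IsCompact K) (μ : Measure E)
    [μ.IsAddHaarMeasure] (z : E) {r : ℝ} (hr : 0 ≤ r) :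
    μ ((z +ᵥ r • K) ∆ (r • K)) ≤ ENNReal.ofReal (2 * r ^ finrank ℝ E * (μ K).toReal) := by
  refine (measure_symmDiff_vadd_le _ _ _).trans_eq ?_
  rw [Measure.addHaar_smul_of_nonneg _ hr, ENNReal.ofReal_mul (by positivity),
    ENNReal.ofReal_mul zero_le_two, ENNReal.ofReal_toReal hK.measure_lt_top.ne,
    ENNReal.ofReal_ofNat, mul_assoc]

lemma IsCompact.measurableSet_setOf_mem_vadd_smul {K : Set E} (hK : IsCompact K) (v : E) :
    MeasurableSet {p : E × ℝ | v ∈ p.1 +ᵥ p.2 • K} := by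
  have : {p : E × ℝ | v ∈ p.1 +ᵥ p.2 • K}
      = (fun q : E × ℝ => (v - q.2 • q.1, q.2)) '' (K ×ˢ univ) := by
    ext ⟨x, r⟩
    simp only [mem_ofPred_eq, mem_vadd_set_iff_neg_vadd_mem, mem_smul_set, mem_image, mem_prod,
      mem_univ, and_true, Prod.mk.injEq, Prod.exists, exists_eq_right_right]
    refine exists_congr fun k => and_congr_right fun _ => ?_
    rw [vadd_eq_add, neg_add_eq_sub, sub_eq_iff_eq_add, eq_comm, ← sub_eq_iff_eq_add', eq_comm]
  rw [this]
  exact ((isSigmaCompact_univ.of_isClosed_subset (hK.isClosed.prod isClosed_univ)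
    (subset_univ _)).image (by fun_prop)).measurableSet

theorem IsCompact.integrable_indicator_vadd_smul_sub {K : Set E} (hK : IsCompact K) (z : E)
    (μ : Measure E) [μ.IsAddHaarMeasure] {d s a b : ℝ} (hs0 : 0 < s) (hs1 : s < 1)
    (hVa : ∀ r > 0, μ ((z +ᵥ r • K) ∆ (r • K)) ≤ ENNReal.ofReal (a * r ^ d))
    (hVb : ∀ r > 0, μ ((z +ᵥ r • K) ∆ (r • K)) ≤ ENNReal.ofReal (b * r ^ (d - 1))) :
    Integrable (fun p : E × ℝ => (p.1 +ᵥ p.2 • K).indicator (fun _ => (1 : ℝ)) z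
        - (p.1 +ᵥ p.2 • K).indicator (fun _ => 1) 0)
      (μ.prod ((volume.restrict (Ioi 0)).withDensity
        fun r => ENNReal.ofReal (r ^ (-d - 1 + s)))) := by
  have hf : Measurable fun p : E × ℝ => (p.1 +ᵥ p.2 • K).indicator (fun _ => (1 : ℝ)) z
      - (p.1 +ᵥ p.2 • K).indicator (fun _ => 1) 0 :=
    (measurable_const.indicator (hK.measurableSet_setOf_mem_vadd_smul z)).sub
      (measurable_const.indicator (hK.measurableSet_setOf_mem_vadd_smul 0))
  refine ⟨hf.aestronglyMeasurable, ?_⟩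
  rw [hasFiniteIntegral_iff_enorm, lintegral_prod_symm _ hf.enorm.aemeasurable,
    lintegral_congr fun r =>
      lintegral_enorm_indicator_vadd_sub_indicator_vadd z μ (hK.smul r).measurableSet]
  exact (lintegral_withDensity_le_lintegral_mul _ (by fun_prop) _).trans_lt
    (lintegral_Ioi_ofReal_rpow_mul_lt_top hs0 hs1 hVa hVb)

end Integrability

theorem stmt16_general {d : ℕ} (K : Set (EuclideanSpace ℝ (Fin d)))
    (hKconv : Convex ℝ K) (hKcomp : IsCompact K)
    (z : EuclideanSpace ℝ (Fin d)) (hz : z ≠ 0)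
    (H : ℝ) (hH : H ∈ Set.Ioo (0 : ℝ) (1 / 2))
    (ν : Measure (EuclideanSpace ℝ (Fin d) × ℝ))
    (hν : ν = (volume : Measure (EuclideanSpace ℝ (Fin d))).prod
      (((volume : Measure ℝ).restrict (Set.Ioi 0)).withDensity
        (fun r => ENNReal.ofReal (r ^ (-(d : ℝ) - 1 + 2 * H))))) :
    (∀ r : ℝ, 0 < r →
      (∫ x : EuclideanSpace ℝ (Fin d), |Set.indicator (x +ᵥ r • K : Set (EuclideanSpace ℝ (Fin d))) (fun _ => (1 : ℝ)) z
          - Set.indicator (x +ᵥ r • K) (fun _ => (1 : ℝ)) 0|)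
        = (volume (symmDiff (z +ᵥ r • K) (r • K))).toReal ∧
      (volume (symmDiff (z +ᵥ r • K) (r • K))).toReal
        ≤ min (2 * r ^ d * (volume K).toReal)
            (r ^ (d - 1)
              * (μH[(d : ℝ) - 1]
                  ((fun x => x - ((inner ℝ x z : ℝ) / ‖z‖ ^ 2) • z) '' K)).toReal
              * (2 * ‖z‖))) ∧
    Integrable (fun p : EuclideanSpace ℝ (Fin d) × ℝ =>
      Set.indicator (p.1 +ᵥ p.2 • K) (fun _ => (1 : ℝ)) z
        - Set.indicator (p.1 +ᵥ p.2 • K) (fun _ => (1 : ℝ)) 0) ν := by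
  obtain ⟨m, rfl⟩ : ∃ m, d = m + 1 :=
    Nat.exists_eq_succ_of_ne_zero fun hd => hz (by subst hd; exact Subsingleton.elim _ _)
  have hF : finrank ℝ (EuclideanSpace ℝ (Fin (m + 1))) = m + 1 := finrank_euclideanSpace_fin
  have hV₁ (r : ℝ) (hr : 0 < r) := hF ▸ hKcomp.measure_symmDiff_vadd_smul_le volume z hr.le
  have hV₂ (r : ℝ) (hr : 0 < r) := hKconv.volume_symmDiff_vadd_smul_le hF hKcomp hz hr
  simp only [Nat.cast_add_one, add_sub_cancel_right, Nat.add_sub_cancel]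
  refine ⟨fun r hr => ⟨integral_abs_indicator_vadd_sub_indicator_vadd z volume
    (hKcomp.smul r).measurableSet, le_min ?_ ?_⟩, ?_⟩
  · exact ENNReal.toReal_le_of_le_ofReal (by positivity) (hV₁ r hr)
  · exact ENNReal.toReal_le_of_le_ofReal (by positivity) (hV₂ r hr)
  · subst hν
    refine hKcomp.integrable_indicator_vadd_smul_sub z volume (a := 2 * (volume K).toReal)
      (b := (μH[m] (perpProj z '' K)).toReal * (2 * ‖z‖)) (by linarith [hH.1])
      (by linarith [hH.2]) (fun r hr => (hV₁ r hr).trans_eq ?_)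
      (fun r hr => (hV₂ r hr).trans_eq ?_)
    · rw [Real.rpow_natCast]; ring_nf
    · rw [Nat.cast_add_one, add_sub_cancel_right, Real.rpow_natCast]; ring_nf

theorem stmt16 {d : ℕ} (hd : 1 ≤ d) (K : Set (EuclideanSpace ℝ (Fin d)))
    (hKconv : Convex ℝ K) (hKcomp : IsCompact K) (hKint : (interior K).Nonempty)
    (z : EuclideanSpace ℝ (Fin d)) (hz : z ≠ 0)
    (H : ℝ) (hH : H ∈ Set.Ioo (0 : ℝ) (1 / 2))
    (ν : Measure (EuclideanSpace ℝ (Fin d) × ℝ))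
    (hν : ν = (volume : Measure (EuclideanSpace ℝ (Fin d))).prod
      (((volume : Measure ℝ).restrict (Set.Ioi 0)).withDensity
        (fun r => ENNReal.ofReal (r ^ (-(d : ℝ) - 1 + 2 * H))))) :
    (∀ r : ℝ, 0 < r →
      (∫ x : EuclideanSpace ℝ (Fin d), |Set.indicator (x +ᵥ r • K : Set (EuclideanSpace ℝ (Fin d))) (fun _ => (1 : ℝ)) z
          - Set.indicator (x +ᵥ r • K) (fun _ => (1 : ℝ)) 0|)
        = (volume (symmDiff (z +ᵥ r • K) (r • K))).toReal ∧
      (volume (symmDiff (z +ᵥ r • K) (r • K))).toReal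
        ≤ min (2 * r ^ d * (volume K).toReal)
            (r ^ (d - 1)
              * (μH[(d : ℝ) - 1]
                  ((fun x => x - ((inner ℝ x z : ℝ) / ‖z‖ ^ 2) • z) '' K)).toReal
              * (2 * ‖z‖))) ∧
    Integrable (fun p : EuclideanSpace ℝ (Fin d) × ℝ =>
      Set.indicator (p.1 +ᵥ p.2 • K) (fun _ => (1 : ℝ)) z
        - Set.indicator (p.1 +ᵥ p.2 • K) (fun _ => (1 : ℝ)) 0) ν :=
  stmt16_general K hKconv hKcomp z hz H hH ν hν
end

section
/- Let K be a convex body in ℝ^d, 0 < H < 1/2, and let ξ be the fractional Poisson field ξ(z) = ∫ (1_{z∈x+rK} - 1_{0∈x+rK}) N_H(dx,dr) driven by a Poisson process N_H with intensity ν_H(dx,dr) = dx r^{-d-1+2H} dr. Then for every z with ‖z‖=1, E[ξ(z)²] = (Vol_d(K)/H) · ‖z‖_{R_{-2H}K}^{2H}, where R_p K is the radial p-th mean body with ‖u‖_{R_pK} = ((1/Vol_d(K)) ∫_K ρ_K(x,u)^p dx)^{-1/p} and ρ_K(x,u) = max{t : x+tu ∈ K}. -/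
/-!
Scaling by `r` and translation invariance of Lebesgue measure give
`vol((z + rK) ∆ rK) = 2 rᵈ vol{x ∈ K | r < ρ_K(x, z)⁻¹}` for `r > 0`, because `ρ_K(x, z) > 0` off
the boundary of `K`, which is null. Integrating against `r^(-d-1+2H)`, the factor `rᵈ` leaves
`2 ∫₀^∞ vol{x ∈ K | r < ρ_K(x, z)⁻¹} r^(2H-1) dr`, which by the layer-cake formula equals
`H⁻¹ ∫_K ρ_K(x, z)^(-2H) dx`; this combines the chord-length formula with the Gardner–Zhang
identity, and unfolding `‖z‖_{R_{-2H} K}` turns it into the claimed right-hand side.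
-/

open MeasureTheory Set Filter Topology
open scoped Pointwise symmDiff ENNReal

section Translation

variable {G : Type*} [AddGroup G] [MeasurableSpace G] [MeasurableAdd G]
  {μ : Measure G} [μ.IsAddLeftInvariant]

theorem measure_symmDiff_vadd_self {A : Set G} (hA : MeasurableSet A) (hμA : μ A ≠ ∞) (v : G) :
    μ ((v +ᵥ A) ∆ A) = 2 * μ (A \ (-v +ᵥ A)) := by
  have hsymm : μ (A \ (v +ᵥ A)) = μ ((v +ᵥ A) \ A) :=
    measure_sdiff_symm hA.nullMeasurableSet (hA.const_vadd v).nullMeasurableSet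
      (measure_vadd μ v A).symm (measure_ne_top_of_subset inter_subset_left hμA)
  have hshift : μ ((v +ᵥ A) \ A) = μ (A \ (-v +ᵥ A)) := by
    rw [← measure_vadd μ (-v), vadd_set_sdiff, neg_vadd_vadd]
  rw [Set.symmDiff_def, measure_union disjoint_sdiff_sdiff (hA.diff (hA.const_vadd v)),
    hsymm, hshift, two_mul]

end Translation

section RadialFunction

variable {E : Type*} [NormedAddCommGroup E] [NormedSpace ℝ E]

/-- The paper's `ρ_K(x, u)`; meaningful only for `x ∈ K`, `u ≠ 0` and bounded `K`, the `sSup` being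
junk otherwise. -/
noncomputable def radialFunction (K : Set E) (x u : E) : ℝ :=
  sSup {t : ℝ | 0 ≤ t ∧ x + t • u ∈ K}

variable {K : Set E} {x u : E}

theorem add_smul_mem_iff_le_radialFunction (hKc : Convex ℝ K) (hKk : IsCompact K) (hx : x ∈ K)
    (hu : u ≠ 0) {t : ℝ} (ht : 0 ≤ t) : x + t • u ∈ K ↔ t ≤ radialFunction K x u := by
  set S := {t : ℝ | 0 ≤ t ∧ x + t • u ∈ K}
  have h0 : (0 : ℝ) ∈ S := ⟨le_rfl, by simpa using hx⟩
  have hS : IsCompact S :=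
    (((Homeomorph.addLeft x).isClosedEmbedding.comp
      (isClosedEmbedding_smul_left hu)).isCompact_preimage hKk).inter_left isClosed_Ici
  have hSconv : Convex ℝ S := by
    have hpre : S = Ici 0 ∩ AffineMap.lineMap x (x + u) ⁻¹' K := by
      ext t
      simp [S, AffineMap.lineMap_apply_module', add_comm]
    rw [hpre]
    exact (convex_Ici 0).inter (hKc.affine_preimage _)
  exact ⟨fun h => le_csSup hS.bddAbove ⟨ht, h⟩,
    fun h => (hSconv.ordConnected.out h0 (hS.sSup_mem ⟨0, h0⟩) ⟨ht, h⟩).2⟩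

theorem radialFunction_nonneg (hKc : Convex ℝ K) (hKk : IsCompact K) (hx : x ∈ K) (hu : u ≠ 0) :
    0 ≤ radialFunction K x u :=
  (add_smul_mem_iff_le_radialFunction hKc hKk hx hu le_rfl).1 (by simpa using hx)

theorem radialFunction_pos_of_mem_interior (hKc : Convex ℝ K) (hKk : IsCompact K)
    (hx : x ∈ interior K) (hu : u ≠ 0) : 0 < radialFunction K x u := by
  have hnear : ∀ᶠ t in 𝓝 (0 : ℝ), x + t • u ∈ K := by
    have : Tendsto (fun t : ℝ => x + t • u) (𝓝 0) (𝓝 x) :=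
      (continuous_const.add (continuous_id.smul continuous_const)).tendsto' 0 x (by simp)
    exact this (mem_interior_iff_mem_nhds.1 hx)
  obtain ⟨t, ht, htK⟩ := hnear.exists_gt
  exact ht.trans_le
    ((add_smul_mem_iff_le_radialFunction hKc hKk (interior_subset hx) hu ht.le).1 htK)

theorem measurable_indicator_radialFunction [MeasurableSpace E] [BorelSpace E] (hKc : Convex ℝ K)
    (hKk : IsCompact K) (hu : u ≠ 0) : Measurable (K.indicator fun x => radialFunction K x u) := by
  refine measurable_of_Ici fun a => ?_
  rcases le_or_gt a 0 with ha | ha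
  · convert MeasurableSet.univ
    ext x
    by_cases hx : x ∈ K
    · simpa [hx] using ha.trans (radialFunction_nonneg hKc hKk hx hu)
    · simpa [hx] using ha
  · have hsuper : (K.indicator fun x => radialFunction K x u) ⁻¹' Ici a
        = K ∩ (fun x => x + a • u) ⁻¹' K := by
      ext x
      by_cases hx : x ∈ K
      · simp [hx, add_smul_mem_iff_le_radialFunction hKc hKk hx hu ha.le]
      · simpa [hx] using ha
    rw [hsuper]
    exact (hKk.isClosed.inter (hKk.isClosed.preimage (by fun_prop))).measurableSet

theorem aemeasurable_radialFunction [MeasurableSpace E] [BorelSpace E] (μ : Measure E)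
    (hKc : Convex ℝ K) (hKk : IsCompact K) (hu : u ≠ 0) :
    AEMeasurable (fun x => radialFunction K x u) (μ.restrict K) :=
  (measurable_indicator_radialFunction hKc hKk hu).aemeasurable.congr
    (indicator_ae_eq_restrict hKk.measurableSet)

end RadialFunction

theorem measure_symmDiff_vadd_smul_ne_top {E : Type*} [NormedAddCommGroup E] [NormedSpace ℝ E]
    [MeasurableSpace E] (μ : Measure E) [IsFiniteMeasureOnCompacts μ] {K : Set E}
    (hKk : IsCompact K) (u : E) (r : ℝ) : μ ((u +ᵥ r • K) ∆ (r • K)) ≠ ∞ :=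
  measure_ne_top_of_subset symmDiff_subset_union
    (((hKk.smul r).vadd u).union (hKk.smul r)).measure_lt_top.ne

section HaarMeasure

variable {E : Type*} [NormedAddCommGroup E] [NormedSpace ℝ E] [FiniteDimensional ℝ E]
  [MeasurableSpace E] [BorelSpace E] (μ : Measure E) [μ.IsAddHaarMeasure] {K : Set E} {u : E}

theorem ae_restrict_radialFunction_pos (hKc : Convex ℝ K) (hKk : IsCompact K) (hu : u ≠ 0) :
    ∀ᵐ x ∂μ.restrict K, 0 < radialFunction K x u := by
  have hfrontier : ∀ᵐ x ∂μ, x ∉ frontier K :=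
    measure_eq_zero_iff_ae_notMem.1 (hKc.addHaar_frontier μ)
  filter_upwards [ae_restrict_of_ae hfrontier, ae_restrict_mem hKk.measurableSet] with x hxf hxK
  refine radialFunction_pos_of_mem_interior hKc hKk ?_ hu
  by_contra hxi
  exact hxf ⟨subset_closure hxK, hxi⟩

theorem measure_sdiff_vadd_eq_measure_lt_inv_radialFunction (hKc : Convex ℝ K)
    (hKk : IsCompact K) (hu : u ≠ 0) {r : ℝ} (hr : 0 < r) :
    μ (K \ (-(r⁻¹ • u) +ᵥ K)) = μ.restrict K {x | r < (radialFunction K x u)⁻¹} := by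
  calc μ (K \ (-(r⁻¹ • u) +ᵥ K)) = μ.restrict K (-(r⁻¹ • u) +ᵥ K)ᶜ := by
        rw [Measure.restrict_apply' hKk.measurableSet, sdiff_eq, inter_comm]
    _ = μ.restrict K {x | r < (radialFunction K x u)⁻¹} := by
        refine measure_congr (eventuallyEq_set.2 ?_)
        filter_upwards [ae_restrict_radialFunction_pos μ hKc hKk hu,
          ae_restrict_mem hKk.measurableSet] with x hρ hxK
        rw [mem_compl_iff, mem_vadd_set_iff_neg_vadd_mem, neg_neg, vadd_eq_add, add_comm,
          add_smul_mem_iff_le_radialFunction hKc hKk hxK hu (inv_nonneg.2 hr.le),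
          inv_le_comm₀ hr hρ, not_le]

theorem addHaar_symmDiff_vadd_smul {A : Set E} (v : E) {r : ℝ} (hr : 0 < r) :
    μ ((v +ᵥ r • A) ∆ (r • A))
      = ENNReal.ofReal (r ^ Module.finrank ℝ E) * μ ((r⁻¹ • v +ᵥ A) ∆ A) := by
  have hscale : (v +ᵥ r • A) ∆ (r • A) = r • ((r⁻¹ • v +ᵥ A) ∆ A) := by
    rw [smul_set_symmDiff₀ hr.ne']
    simp only [← image_smul, ← image_vadd, image_image, vadd_eq_add, smul_add,
      smul_inv_smul₀ hr.ne']
  rw [hscale, Measure.addHaar_smul_of_nonneg μ hr.le]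

theorem addHaar_symmDiff_vadd_smul_eq_radialFunction (hKc : Convex ℝ K) (hKk : IsCompact K)
    (hu : u ≠ 0) {r : ℝ} (hr : 0 < r) :
    μ ((u +ᵥ r • K) ∆ (r • K)) = ENNReal.ofReal (r ^ Module.finrank ℝ E)
      * (2 * μ.restrict K {x | r < (radialFunction K x u)⁻¹}) := by
  rw [addHaar_symmDiff_vadd_smul μ u hr,
    measure_symmDiff_vadd_self hKk.measurableSet hKk.measure_lt_top.ne,
    measure_sdiff_vadd_eq_measure_lt_inv_radialFunction μ hKc hKk hu hr]

theorem lintegral_addHaar_symmDiff_vadd_smul (hKc : Convex ℝ K) (hKk : IsCompact K)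
    (hu : u ≠ 0) {p : ℝ} (hp : 0 < p) :
    ∫⁻ r in Ioi 0, μ ((u +ᵥ r • K) ∆ (r • K))
        * ENNReal.ofReal (r ^ (-(Module.finrank ℝ E : ℝ) - 1 + p))
      = ENNReal.ofReal (2 / p) * ∫⁻ x in K, ENNReal.ofReal (radialFunction K x u ^ (-p)) ∂μ := by
  set n := Module.finrank ℝ E
  set ρ := fun x => radialFunction K x u
  have hlayer := lintegral_rpow_eq_lintegral_meas_lt_mul (μ.restrict K)
    (f := fun x => (ρ x)⁻¹)
    ((ae_restrict_radialFunction_pos μ hKc hKk hu).mono fun x hx => (inv_pos.2 hx).le)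
    (aemeasurable_radialFunction μ hKc hKk hu).inv hp
  have hpow : ∀ r : ℝ, 0 < r →
      ENNReal.ofReal (r ^ n) * ENNReal.ofReal (r ^ (-(n : ℝ) - 1 + p))
        = ENNReal.ofReal (r ^ (p - 1)) := by
    intro r hr
    rw [← ENNReal.ofReal_mul (by positivity), ← Real.rpow_natCast, ← Real.rpow_add hr]
    ring_nf
  calc ∫⁻ r in Ioi 0, μ ((u +ᵥ r • K) ∆ (r • K)) * ENNReal.ofReal (r ^ (-(n : ℝ) - 1 + p))
      = ∫⁻ r in Ioi 0, 2 * (μ.restrict K {x | r < (ρ x)⁻¹} * ENNReal.ofReal (r ^ (p - 1))) := by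
        refine setLIntegral_congr_fun measurableSet_Ioi fun r hr => ?_
        rw [addHaar_symmDiff_vadd_smul_eq_radialFunction μ hKc hKk hu hr, ← hpow r hr]
        ring
    _ = 2 * ((ENNReal.ofReal p)⁻¹ * ∫⁻ x in K, ENNReal.ofReal ((ρ x)⁻¹ ^ p) ∂μ) := by
        rw [lintegral_const_mul' _ _ ENNReal.ofNat_ne_top, hlayer,
          ENNReal.inv_mul_cancel_left (by simpa using hp) ENNReal.ofReal_ne_top]
    _ = ENNReal.ofReal (2 / p) * ∫⁻ x in K, ENNReal.ofReal (ρ x ^ (-p)) ∂μ := by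
        rw [← mul_assoc, ENNReal.ofReal_div_of_pos hp, ENNReal.ofReal_ofNat, div_eq_mul_inv]
        congr 1
        refine setLIntegral_congr_fun hKk.measurableSet fun x hx => ?_
        rw [Real.inv_rpow (radialFunction_nonneg hKc hKk hx hu), Real.rpow_neg
          (radialFunction_nonneg hKc hKk hx hu)]

theorem aemeasurable_addHaar_symmDiff_vadd_smul (hKc : Convex ℝ K) (hKk : IsCompact K)
    (hu : u ≠ 0) :
    AEMeasurable (fun r => μ ((u +ᵥ r • K) ∆ (r • K))) (volume.restrict (Ioi (0 : ℝ))) := by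
  have hanti : Antitone fun r => μ.restrict K {x | r < (radialFunction K x u)⁻¹} :=
    fun a b hab => measure_mono fun x hx => hab.trans_lt hx
  refine (((by fun_prop : Measurable fun r : ℝ => ENNReal.ofReal (r ^ Module.finrank ℝ E)).mul
    (hanti.measurable.const_mul 2)).aemeasurable).congr ?_
  exact (ae_restrict_iff' measurableSet_Ioi).2 (ae_of_all _ fun r hr =>
    (addHaar_symmDiff_vadd_smul_eq_radialFunction μ hKc hKk hu hr).symm)

theorem integral_addHaar_symmDiff_vadd_smul (hKc : Convex ℝ K) (hKk : IsCompact K)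
    (hu : u ≠ 0) {p : ℝ} (hp : 0 < p) :
    ∫ r in Ioi 0, (μ ((u +ᵥ r • K) ∆ (r • K))).toReal
        * r ^ (-(Module.finrank ℝ E : ℝ) - 1 + p)
      = 2 / p * ∫ x in K, radialFunction K x u ^ (-p) ∂μ := by
  set n := Module.finrank ℝ E
  have hlhs : ∫ r in Ioi 0, (μ ((u +ᵥ r • K) ∆ (r • K))).toReal * r ^ (-(n : ℝ) - 1 + p)
      = (∫⁻ r in Ioi 0, μ ((u +ᵥ r • K) ∆ (r • K))
          * ENNReal.ofReal (r ^ (-(n : ℝ) - 1 + p))).toReal := by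
    rw [integral_eq_lintegral_of_nonneg_ae
      ((ae_restrict_iff' measurableSet_Ioi).2 (ae_of_all _ fun r hr =>
        mul_nonneg ENNReal.toReal_nonneg (Real.rpow_nonneg (le_of_lt hr) _)))
      ((aemeasurable_addHaar_symmDiff_vadd_smul μ hKc hKk hu).ennreal_toReal.mul
        (by fun_prop)).aestronglyMeasurable]
    congr 1
    refine setLIntegral_congr_fun measurableSet_Ioi fun r _ => ?_
    rw [ENNReal.ofReal_mul ENNReal.toReal_nonneg,
      ENNReal.ofReal_toReal (measure_symmDiff_vadd_smul_ne_top μ hKk u r)]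
  have hrhs : ∫ x in K, radialFunction K x u ^ (-p) ∂μ
      = (∫⁻ x in K, ENNReal.ofReal (radialFunction K x u ^ (-p)) ∂μ).toReal :=
    integral_eq_lintegral_of_nonneg_ae
      ((ae_restrict_iff' hKk.measurableSet).2 (ae_of_all _ fun x hx =>
        Real.rpow_nonneg (radialFunction_nonneg hKc hKk hx hu) _))
      ((aemeasurable_radialFunction μ hKc hKk hu).pow_const _).aestronglyMeasurable
  rw [hlhs, hrhs, lintegral_addHaar_symmDiff_vadd_smul μ hKc hKk hu hp, ENNReal.toReal_mul,
    ENNReal.toReal_ofReal (by positivity)]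

end HaarMeasure

theorem stmt17_general {d : ℕ} {Ω : Type*} [MeasurableSpace Ω]
    (P : Measure Ω)
    (K : Set (EuclideanSpace ℝ (Fin d)))
    (hKconv : Convex ℝ K) (hKcomp : IsCompact K) (hKint : (interior K).Nonempty)
    (H : ℝ) (hH : H ∈ Set.Ioo (0 : ℝ) (1 / 2))
    (ξ : EuclideanSpace ℝ (Fin d) → Ω → ℝ)
    -- the Poisson isometry: the variance of the Poisson integral `ξ(z)` equals the
    -- `ν_H`-integral of the squared integrand
    (hVar : ∀ z, ∫ ω, (ξ z ω) ^ 2 ∂P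
      = ∫ r in Set.Ioi (0 : ℝ),
          (volume (symmDiff (z +ᵥ r • K) (r • K))).toReal
            * r ^ (-(d : ℝ) - 1 + 2 * H)) :
    ∀ z : EuclideanSpace ℝ (Fin d), ‖z‖ = 1 →
      ∫ ω, (ξ z ω) ^ 2 ∂P
        = ((volume K).toReal / H)
            * (((1 / (volume K).toReal)
                * ∫ x in K,
                    (sSup {t : ℝ | 0 ≤ t ∧ x + t • z ∈ K}) ^ (-(2 * H)))
                  ^ (-(1 : ℝ) / (-(2 * H)))) ^ (2 * H) := by
  intro z hz
  have hz0 : z ≠ 0 := by rintro rfl; simp at hz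
  have hH0 : 0 < H := hH.1
  have hV : 0 < (volume K).toReal :=
    ENNReal.toReal_pos (Measure.measure_pos_of_nonempty_interior volume hKint).ne'
      hKcomp.measure_lt_top.ne
  have hI : 0 ≤ ∫ x in K, radialFunction K x z ^ (-(2 * H)) :=
    setIntegral_nonneg hKcomp.measurableSet fun x hx =>
      Real.rpow_nonneg (radialFunction_nonneg hKconv hKcomp hx hz0) _
  have hformula := integral_addHaar_symmDiff_vadd_smul volume hKconv hKcomp hz0
    (mul_pos two_pos hH0)
  rw [finrank_euclideanSpace_fin] at hformula
  change _ = _ * ((1 / _ * ∫ x in K, radialFunction K x z ^ (-(2 * H))) ^ _) ^ _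
  rw [hVar z, hformula, ← Real.rpow_mul (by positivity),
    show -(1 : ℝ) / -(2 * H) * (2 * H) = 1 by field_simp, Real.rpow_one]
  field_simp

theorem stmt17 {d : ℕ} {Ω : Type*} [MeasurableSpace Ω]
    (P : Measure Ω) [IsProbabilityMeasure P]
    (K : Set (EuclideanSpace ℝ (Fin d)))
    (hKconv : Convex ℝ K) (hKcomp : IsCompact K) (hKint : (interior K).Nonempty)
    (H : ℝ) (hH : H ∈ Set.Ioo (0 : ℝ) (1 / 2))
    (ξ : EuclideanSpace ℝ (Fin d) → Ω → ℝ)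
    -- the Poisson isometry: the variance of the Poisson integral `ξ(z)` equals the
    -- `ν_H`-integral of the squared integrand
    (hVar : ∀ z, ∫ ω, (ξ z ω) ^ 2 ∂P
      = ∫ r in Set.Ioi (0 : ℝ),
          (volume (symmDiff (z +ᵥ r • K) (r • K))).toReal
            * r ^ (-(d : ℝ) - 1 + 2 * H)) :
    ∀ z : EuclideanSpace ℝ (Fin d), ‖z‖ = 1 →
      ∫ ω, (ξ z ω) ^ 2 ∂P
        = ((volume K).toReal / H)
            * (((1 / (volume K).toReal)
                * ∫ x in K,
                    (sSup {t : ℝ | 0 ≤ t ∧ x + t • z ∈ K}) ^ (-(2 * H)))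
                  ^ (-(1 : ℝ) / (-(2 * H)))) ^ (2 * H) :=
  stmt17_general P K hKconv hKcomp hKint H hH ξ hVar
end
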